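/- Let S be a right regular band of groups that is a monoid, k a field, A = kS the monoid algebra, and e ∈ S an idempotent. Let M and N be right A-modules with N simple and N·e ≠ 0. Then for every n ≥ 0 there is an isomorphism Ext^n_A(M, N) ≅ Ext^n_{eAe}(M·e, N·e), where eAe = e·A·e and M·e, N·e are right eAe-modules via restriction. -/

import Mathlib

/-!
Write `ε = single e 1`. The identity `e·t·e = t·e` gives `ε·a·ε = a·ε` in `kS`, so `a ↦ a·ε` is a
ring map `kS → εkSε`, and the functor `F : X ↦ X·ε` is left adjoint to restriction `G` along it.
`G` preserves surjections, so `F` preserves projectives; `F` is also exact, hence it carries a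
projective resolution of `M` to one of `M·ε`. A simple `N` with `N·ε ≠ 0` is fixed by `ε`, since
`{v | v·ε = 0}` is a proper submodule; then the unit `N → G F N` is an isomorphism, so `F` induces
`Hom(X, N) ≅ Hom(X·ε, N·ε)` naturally in `X`, identifying the Hom complexes computing both `Ext`s.
-/

open CategoryTheory MulOpposite ModuleCat

/-- `spow s n` is the (n+1)-st power `s^(n+1)` of `s`, so that `spow s n` for `n : ℕ`
ranges over all positive powers of `s`. -/
def spow {S : Type*} [Semigroup S] (s : S) : ℕ → S
  | 0 => s
  | n + 1 => spow s n * s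

section Corner

variable (k : Type) [Field k] (A : Type) [Ring A] [Algebra k A]

/-- The `k`-subspace `εAε = {x : A | ε·x·ε = x}` of `A`. -/
def cornerSubmodule (ε : A) : Submodule k A where
  carrier := {x : A | ε * x * ε = x}
  add_mem' := by
    intro a b ha hb
    show ε * (a + b) * ε = a + b
    rw [mul_add, add_mul, ha, hb]
  zero_mem' := by
    show ε * 0 * ε = 0
    rw [mul_zero, zero_mul]
  smul_mem' := by
    intro c x hx
    show ε * (c • x) * ε = c • x
    rw [mul_smul_comm, smul_mul_assoc, hx]

/-- The corner ring `εAε` at an idempotent `ε` of `A`,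
a unital `k`-algebra with identity `ε`. -/
def Corner (ε : A) (_hε : ε * ε = ε) : Type := ↥(cornerSubmodule k A ε)

namespace Corner

variable {k A} {ε : A} {hε : ε * ε = ε}

instance : AddCommGroup (Corner k A ε hε) :=
  inferInstanceAs (AddCommGroup ↥(cornerSubmodule k A ε))

instance : Module k (Corner k A ε hε) :=
  inferInstanceAs (Module k ↥(cornerSubmodule k A ε))

/-- The underlying element of `A`. -/
def val (x : Corner k A ε hε) : A := (show ↥(cornerSubmodule k A ε) from x).1

theorem prop (x : Corner k A ε hε) : ε * val x * ε = val x :=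
  (show ↥(cornerSubmodule k A ε) from x).2

/-- Build an element of the corner. -/
def mk (x : A) (hx : ε * x * ε = x) : Corner k A ε hε :=
  show ↥(cornerSubmodule k A ε) from ⟨x, hx⟩

theorem val_injective : Function.Injective (val : Corner k A ε hε → A) := by
  intro a b h
  exact Subtype.ext h

theorem eps_mul (hε : ε * ε = ε) {x : A} (hx : ε * x * ε = x) : ε * x = x := by
  conv_lhs => rw [← hx]
  simp only [← mul_assoc]
  rw [hε, hx]

theorem mul_eps (hε : ε * ε = ε) {x : A} (hx : ε * x * ε = x) : x * ε = x := by
  conv_lhs => rw [← hx]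
  rw [mul_assoc, hε, hx]

theorem mem_mul (hε : ε * ε = ε) {x y : A} (hx : ε * x * ε = x) (hy : ε * y * ε = y) :
    ε * (x * y) * ε = x * y := by
  simp only [← mul_assoc]
  rw [eps_mul hε hx, mul_assoc, mul_eps hε hy]

noncomputable instance ring : Ring (Corner k A ε hε) :=
  { (inferInstanceAs (AddCommGroup (Corner k A ε hε)) : AddCommGroup (Corner k A ε hε)) with
    mul := fun x y => mk (val x * val y) (mem_mul hε x.prop y.prop)
    mul_assoc := fun a b c => val_injective (mul_assoc (val a) (val b) (val c))
    one := mk ε (by rw [hε, hε])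
    one_mul := fun a => val_injective (eps_mul hε a.prop)
    mul_one := fun a => val_injective (mul_eps hε a.prop)
    left_distrib := fun a b c => val_injective (mul_add (val a) (val b) (val c))
    right_distrib := fun a b c => val_injective (add_mul (val a) (val b) (val c))
    zero_mul := fun a => val_injective (zero_mul (val a))
    mul_zero := fun a => val_injective (mul_zero (val a)) }

theorem val_mul (x y : Corner k A ε hε) : val (x * y) = val x * val y := rfl
theorem val_one : val (1 : Corner k A ε hε) = ε := rfl

noncomputable instance algebra : Algebra k (Corner k A ε hε) :=
  Algebra.ofModule
    (fun c x y => val_injective (by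
      show (c • val x) * val y = c • (val x * val y)
      exact smul_mul_assoc c (val x) (val y)))
    (fun c x y => val_injective (by
      show val x * (c • val y) = c • (val x * val y)
      exact mul_smul_comm c (val x) (val y)))

end Corner

end Corner

section Me

variable {k : Type} [Field k] {S : Type} [Monoid S]

theorem singleIdem (k : Type) [Field k] {S : Type} [Monoid S] {e : S} (he : e * e = e) :
    MonoidAlgebra.single e (1 : k) * MonoidAlgebra.single e (1 : k)
      = MonoidAlgebra.single e (1 : k) := by
  rw [MonoidAlgebra.single_mul_single, he, one_mul]

/-- The subspace `M·e` of a right `kS`-module `M`. -/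
noncomputable def MeSub (k : Type) [Field k] {S : Type} [Monoid S] (e : S)
    (M : ModuleCat (MonoidAlgebra k S)ᵐᵒᵖ) : Submodule k M :=
  Submodule.span k {m : M | ∃ m' : M, m = op (MonoidAlgebra.single e (1 : k)) • m'}

theorem smul_comm_k (M : ModuleCat (MonoidAlgebra k S)ᵐᵒᵖ)
    (r : (MonoidAlgebra k S)ᵐᵒᵖ) (c : k) (v : M) : r • (c • v) = c • (r • v) := by
  rw [algebra_compatible_smul (MonoidAlgebra k S)ᵐᵒᵖ c v,
    algebra_compatible_smul (MonoidAlgebra k S)ᵐᵒᵖ c (r • v),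
    smul_smul, smul_smul, Algebra.commutes]

theorem e_smul_of_mem {e : S}
    (hε : MonoidAlgebra.single e (1 : k) * MonoidAlgebra.single e (1 : k)
      = MonoidAlgebra.single e (1 : k))
    (M : ModuleCat (MonoidAlgebra k S)ᵐᵒᵖ) {v : M} (hv : v ∈ MeSub k e M) :
    op (MonoidAlgebra.single e (1 : k)) • v = v := by
  induction hv using Submodule.span_induction with
  | mem w hw =>
      obtain ⟨m, rfl⟩ := hw
      rw [smul_smul, ← op_mul, hε]
  | zero => rw [smul_zero]
  | add a b _ _ ha hb => rw [smul_add, ha, hb]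
  | smul c a _ ha => rw [smul_comm_k, ha]

theorem smul_eps_mem {e : S} (a : MonoidAlgebra k S) (M : ModuleCat (MonoidAlgebra k S)ᵐᵒᵖ)
    (v : M) : op (a * MonoidAlgebra.single e (1 : k)) • v ∈ MeSub k e M := by
  apply Submodule.subset_span
  exact ⟨op a • v, by rw [smul_smul, ← op_mul]⟩

/-- Right multiplication by elements of the corner algebra `e·kS·e`, as a ring
homomorphism from the opposite of the corner algebra to the endomorphisms of `M·e`. -/
noncomputable def cornerHom (e : S)
    (hε : MonoidAlgebra.single e (1 : k) * MonoidAlgebra.single e (1 : k)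
      = MonoidAlgebra.single e (1 : k))
    (M : ModuleCat (MonoidAlgebra k S)ᵐᵒᵖ) :
    (Corner k (MonoidAlgebra k S) (MonoidAlgebra.single e (1 : k)) hε)ᵐᵒᵖ →+*
      Module.End k ↥(MeSub k e M) where
  toFun b :=
    { toFun := fun v => ⟨op (Corner.val (unop b)) • v.1, by
        rw [← Corner.mul_eps hε (unop b).prop]
        exact smul_eps_mem _ M v.1⟩
      map_add' := fun a b => Subtype.ext (by
        show op _ • ((a : M) + (b : M)) = op _ • (a : M) + op _ • (b : M)
        rw [smul_add])
      map_smul' := fun c a => Subtype.ext (by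
        show op _ • ((c • a : ↥(MeSub k e M)) : M) = c • (op _ • (a : M))
        rw [Submodule.coe_smul, smul_comm_k]) }
  map_one' := by
    ext v
    show op (Corner.val (1 : Corner k (MonoidAlgebra k S) _ _)) • (v : M) = (v : M)
    rw [Corner.val_one]
    exact e_smul_of_mem hε M v.2
  map_mul' x y := by
    ext v
    show op (Corner.val (unop y * unop x)) • (v : M)
      = op (Corner.val (unop x)) • (op (Corner.val (unop y)) • (v : M))
    rw [Corner.val_mul, smul_smul, ← op_mul]
  map_zero' := by
    ext v
    show op (Corner.val (0 : Corner k (MonoidAlgebra k S) _ _)) • (v : M) = 0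
    show op ((0 : MonoidAlgebra k S)) • (v : M) = 0
    rw [op_zero, zero_smul]
  map_add' x y := by
    ext v
    show op (Corner.val (unop x + unop y)) • (v : M)
      = op (Corner.val (unop x)) • (v : M) + op (Corner.val (unop y)) • (v : M)
    show op (Corner.val (unop x) + Corner.val (unop y)) • (v : M) = _
    rw [MulOpposite.op_add, add_smul]

/-- `M·e` is a right module over the corner algebra `e·kS·e`. -/
noncomputable instance cornerModule (e : S)
    (hε : MonoidAlgebra.single e (1 : k) * MonoidAlgebra.single e (1 : k)
      = MonoidAlgebra.single e (1 : k))
    (M : ModuleCat (MonoidAlgebra k S)ᵐᵒᵖ) :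
    Module (Corner k (MonoidAlgebra k S) (MonoidAlgebra.single e (1 : k)) hε)ᵐᵒᵖ
      ↥(MeSub k e M) :=
  Module.compHom _ (cornerHom e hε M)

end Me

section CornerFunctor

variable {k : Type} [Field k] {S : Type} [Monoid S] {e : S}

local notation "ε" => MonoidAlgebra.single e (1 : k)

theorem single_mul_mul_single (hcomm : ∀ t : S, e * t * e = t * e) (a : MonoidAlgebra k S) :
    ε * a * ε = a * ε := by
  induction a using MonoidAlgebra.induction_linear with
  | zero => rw [mul_zero, zero_mul]
  | add a b ha hb => rw [mul_add, add_mul, ha, hb, add_mul]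
  | single t c => simp only [MonoidAlgebra.single_mul_single, one_mul, mul_one, hcomm]

theorem single_smul_eq_self_of_isSimpleModule (he : e * e = e)
    (hcomm : ∀ t : S, e * t * e = t * e) {N : ModuleCat (MonoidAlgebra k S)ᵐᵒᵖ}
    (hN : IsSimpleModule (MonoidAlgebra k S)ᵐᵒᵖ N) (hNe : ∃ m : N, op ε • m ≠ 0) (v : N) :
    op ε • v = v := by
  -- `{v | v·ε = 0}` is a submodule because `a·ε = ε·a·ε`
  let K : Submodule (MonoidAlgebra k S)ᵐᵒᵖ N :=
    { carrier := {v | op ε • v = 0}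
      add_mem' := fun hv hw => by simp_all [smul_add]
      zero_mem' := smul_zero _
      smul_mem' := fun a v (hv : op ε • v = 0) => by
        show op ε • a • v = 0
        obtain ⟨a, rfl⟩ := op_surjective a
        rw [smul_smul, ← op_mul, ← single_mul_mul_single hcomm, mul_assoc, op_mul, mul_smul, hv,
          smul_zero] }
  have hK : K = ⊥ := (IsSimpleOrder.eq_bot_or_eq_top K).resolve_right fun h => by
    obtain ⟨m, hm⟩ := hNe
    exact hm (h ▸ Submodule.mem_top : m ∈ K)
  have : v - op ε • v ∈ K := by
    show op ε • (v - op ε • v) = 0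
    rw [smul_sub, smul_smul, ← op_mul, MonoidAlgebra.single_mul_single, he, one_mul, sub_self]
  rw [hK, Submodule.mem_bot, sub_eq_zero] at this
  exact this.symm

variable (he : e * e = e)

local notation "eAe" => Corner k (MonoidAlgebra k S) ε (singleIdem k he)

include he in
theorem mem_MeSub_iff {X : ModuleCat (MonoidAlgebra k S)ᵐᵒᵖ} {v : X} :
    v ∈ MeSub k e X ↔ op ε • v = v :=
  ⟨e_smul_of_mem (singleIdem k he) X, fun h => Submodule.subset_span ⟨v, h.symm⟩⟩

theorem single_smul_mem_MeSub {X : ModuleCat (MonoidAlgebra k S)ᵐᵒᵖ} (v : X) :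
    op ε • v ∈ MeSub k e X :=
  Submodule.subset_span ⟨v, rfl⟩

noncomputable def cornerFunctor :
    ModuleCat (MonoidAlgebra k S)ᵐᵒᵖ ⥤ ModuleCat (eAe)ᵐᵒᵖ where
  obj X := ModuleCat.of _ (MeSub k e X)
  map {X Y} f := ModuleCat.ofHom
    { toFun v := ⟨f v.1, by rw [mem_MeSub_iff he, ← map_smul, (mem_MeSub_iff he).1 v.2]⟩
      map_add' v w := Subtype.ext (map_add f.hom v.1 w.1)
      map_smul' b v := Subtype.ext (map_smul f.hom (op (Corner.val (unop b))) v.1) }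

instance : (cornerFunctor (k := k) he).Additive where

instance : (cornerFunctor (k := k) he).Linear k where
  map_smul f c := by
    ext v
    apply Subtype.ext
    have hfv : op ε • f v.1 = f v.1 := (mem_MeSub_iff he).1 ((cornerFunctor he).map f v).2
    show algebraMap k (MonoidAlgebra k S)ᵐᵒᵖ c • f v.1 = op (c • ε) • f v.1
    rw [Algebra.smul_def, op_mul, ← MulOpposite.algebraMap_apply, ← Algebra.commutes, mul_smul,
      hfv]

instance : (cornerFunctor (k := k) he).PreservesHomology :=
  Functor.preservesHomology_of_map_exact _ fun T hT => by
    rw [ShortComplex.moduleCat_exact_iff] at hT ⊢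
    intro v hv
    obtain ⟨x, hx⟩ := hT v.1 (congrArg Subtype.val hv)
    refine ⟨⟨op ε • x, single_smul_mem_MeSub x⟩, Subtype.ext ?_⟩
    show T.f (op ε • x) = v.1
    rw [map_smul, hx, (mem_MeSub_iff he).1 v.2]

variable (hcomm : ∀ t : S, e * t * e = t * e)

/-- Multiplicative because `b·ε = ε·b·ε`. -/
noncomputable def toCorner : MonoidAlgebra k S →+* eAe where
  toFun a := Corner.mk (a * ε) (by
    rw [← mul_assoc, single_mul_mul_single hcomm, mul_assoc, singleIdem k he])
  map_one' := Corner.val_injective (one_mul _)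
  map_mul' a b := Corner.val_injective (by
    show a * b * ε = a * ε * (b * ε)
    rw [mul_assoc a ε, ← mul_assoc ε, single_mul_mul_single hcomm, mul_assoc])
  map_zero' := Corner.val_injective (zero_mul _)
  map_add' a b := Corner.val_injective (add_mul a b _)

theorem toCorner_val (b : eAe) : toCorner he hcomm (Corner.val b) = b :=
  Corner.val_injective (Corner.mul_eps (singleIdem k he) b.prop)

noncomputable abbrev cornerRestrict : ModuleCat (eAe)ᵐᵒᵖ ⥤ ModuleCat (MonoidAlgebra k S)ᵐᵒᵖ :=
  ModuleCat.restrictScalars (toCorner he hcomm).op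

instance : (cornerRestrict (k := k) he hcomm).PreservesEpimorphisms where
  preserves f hf := (ModuleCat.epi_iff_surjective _).2 ((ModuleCat.epi_iff_surjective f).1 hf)

noncomputable def cornerAdjunction : cornerFunctor (k := k) he ⊣ cornerRestrict he hcomm :=
  Adjunction.mkOfUnitCounit
    { unit :=
        { app X := ModuleCat.ofHom (Y := (cornerRestrict he hcomm).obj ((cornerFunctor he).obj X))
            { toFun x := (⟨op ε • x, single_smul_mem_MeSub x⟩ : MeSub k e X)
              map_add' x y := Subtype.ext (smul_add _ x y)
              map_smul' a x := Subtype.ext (by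
                obtain ⟨a, rfl⟩ := op_surjective a
                show op ε • op a • x = op (a * ε) • op ε • x
                rw [smul_smul, smul_smul, ← op_mul, ← op_mul, ← mul_assoc,
                  single_mul_mul_single hcomm]) }
          naturality _ _ f := by ext x; exact Subtype.ext (map_smul f.hom (op ε) x).symm }
      counit :=
        { app Y := ModuleCat.ofHom
            { toFun w := (w.1 : Y)
              map_add' _ _ := rfl
              map_smul' b w := by
                show op (toCorner he hcomm (Corner.val (unop b))) • w.1 = b • w.1
                rw [toCorner_val, op_unop] } }
      left_triangle := by
        ext X v
        exact Subtype.ext ((mem_MeSub_iff he).1 v.2)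
      right_triangle := by
        ext Y y
        change @HSMul.hSMul (eAe)ᵐᵒᵖ Y Y _ (op (toCorner he hcomm (Corner.val (1 : eAe)))) y = y
        rw [toCorner_val, op_one]
        exact one_smul _ _ }

include hcomm in
theorem cornerFunctor_preservesProjectiveObjects :
    (cornerFunctor (k := k) he).PreservesProjectiveObjects :=
  Functor.preservesProjectiveObjects_of_adjunction_of_preservesEpimorphisms
    (cornerAdjunction he hcomm)

variable {N : ModuleCat (MonoidAlgebra k S)ᵐᵒᵖ}
  (hN : ∀ v : N, op (MonoidAlgebra.single e (1 : k)) • v = v)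
include hcomm hN

theorem isIso_cornerAdjunction_unit_app : IsIso ((cornerAdjunction he hcomm).unit.app N) := by
  rw [ConcreteCategory.isIso_iff_bijective]
  refine ⟨fun x y hxy => ?_, fun w => ⟨w.1, Subtype.ext ((mem_MeSub_iff he).1 w.2)⟩⟩
  rw [← hN x, ← hN y]
  exact congrArg Subtype.val hxy

/-- `Hom(X, N) ≃ Hom(X, G F N) ≃ Hom(F X, F N)`, where `N ≅ G F N` since `ε` fixes `N`. -/
theorem cornerFunctor_map_bijective (X : ModuleCat (MonoidAlgebra k S)ᵐᵒᵖ) :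
    Function.Bijective ((cornerFunctor he).map : (X ⟶ N) → _) := by
  have := isIso_cornerAdjunction_unit_app he hcomm hN
  have hmap : ((cornerFunctor he).map : (X ⟶ N) → _) =
      ((cornerAdjunction he hcomm).homEquiv X _).symm ∘
        ((Iso.refl X).homCongr (asIso ((cornerAdjunction he hcomm).unit.app N))) := by
    ext1 f
    simp [Adjunction.homEquiv_counit]
  rw [hmap]
  exact (Equiv.bijective _).comp (Equiv.bijective _)

noncomputable def linearYonedaObjCornerIso
    (P : ChainComplex (ModuleCat (MonoidAlgebra k S)ᵐᵒᵖ) ℕ) :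
    P.linearYonedaObj k N ≅
      ChainComplex.linearYonedaObj (((cornerFunctor he).mapHomologicalComplex _).obj P) k
        ((cornerFunctor he).obj N) :=
  HomologicalComplex.Hom.isoOfComponents
    (fun i => (LinearEquiv.ofBijective ((cornerFunctor he).mapLinearMap k)
      (cornerFunctor_map_bijective he hcomm hN (P.X i))).toModuleIso)
    (fun _ _ _ => by ext f; exact (cornerFunctor he).map_comp _ f)

end CornerFunctor

theorem stmt17_general (k : Type) [Field k] (S : Type) [Monoid S]
    (h2 : ∀ e : S, e * e = e → ∀ t : S, e * t * e = t * e)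
    (e : S) (he : e * e = e)
    (M N : ModuleCat (MonoidAlgebra k S)ᵐᵒᵖ)
    (hNsimple : IsSimpleModule (MonoidAlgebra k S)ᵐᵒᵖ N)
    (hNe : ∃ m : N, op (MonoidAlgebra.single e (1 : k)) • m ≠ 0)
    (n : ℕ) :
    Nonempty
      ((((Ext k (ModuleCat (MonoidAlgebra k S)ᵐᵒᵖ) n).obj (Opposite.op M)).obj N) ≅
        (((Ext k (ModuleCat (Corner k (MonoidAlgebra k S)
              (MonoidAlgebra.single e (1 : k)) (singleIdem k he))ᵐᵒᵖ) n).obj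
            (Opposite.op (ModuleCat.of (Corner k (MonoidAlgebra k S)
              (MonoidAlgebra.single e (1 : k)) (singleIdem k he))ᵐᵒᵖ ↥(MeSub k e M)))).obj
          (ModuleCat.of (Corner k (MonoidAlgebra k S)
            (MonoidAlgebra.single e (1 : k)) (singleIdem k he))ᵐᵒᵖ ↥(MeSub k e N)))) := by
  have hcomm := h2 e he
  have hN := single_smul_eq_self_of_isSimpleModule he hcomm hNsimple hNe
  have := cornerFunctor_preservesProjectiveObjects (k := k) he hcomm
  let P := ProjectiveResolution.of M
  exact ⟨P.isoExt n N ≪≫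
    (HomologicalComplex.homologyFunctor _ _ n).mapIso
      (linearYonedaObjCornerIso he hcomm hN P.complex) ≪≫
    (((cornerFunctor he).mapProjectiveResolution P).isoExt n _).symm⟩

/-- let `S` be a right regular band of groups which is a monoid, `k` a
field, `A = kS`, `e ∈ S` an idempotent, and `M, N` right `A`-modules with `N` simple and
`N·e ≠ 0`.  Then for every `n ≥ 0` there is an isomorphism
`Ext^n_A(M, N) ≅ Ext^n_{eAe}(M·e, N·e)`. -/
theorem stmt17 (k : Type) [Field k] (S : Type) [Monoid S] [Finite S]
    (h1 : ∀ s : S, ∀ n : ℕ, spow s n * spow s n = spow s n → spow s n * s = s)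
    (h2 : ∀ e : S, e * e = e → ∀ t : S, e * t * e = t * e)
    (e : S) (he : e * e = e)
    (M N : ModuleCat (MonoidAlgebra k S)ᵐᵒᵖ)
    (hNsimple : IsSimpleModule (MonoidAlgebra k S)ᵐᵒᵖ N)
    (hNe : ∃ m : N, op (MonoidAlgebra.single e (1 : k)) • m ≠ 0)
    (n : ℕ) :
    Nonempty
      ((((Ext k (ModuleCat (MonoidAlgebra k S)ᵐᵒᵖ) n).obj (Opposite.op M)).obj N) ≅
        (((Ext k (ModuleCat (Corner k (MonoidAlgebra k S)
              (MonoidAlgebra.single e (1 : k)) (singleIdem k he))ᵐᵒᵖ) n).obj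
            (Opposite.op (ModuleCat.of (Corner k (MonoidAlgebra k S)
              (MonoidAlgebra.single e (1 : k)) (singleIdem k he))ᵐᵒᵖ ↥(MeSub k e M)))).obj
          (ModuleCat.of (Corner k (MonoidAlgebra k S)
            (MonoidAlgebra.single e (1 : k)) (singleIdem k he))ᵐᵒᵖ ↥(MeSub k e N)))) :=
  stmt17_general k S h2 e he M N hNsimple hNe n
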